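/- arXiv:2112.13964 — 3 statements merged into one kernel-verified Lean document; each statement's English description precedes it below -/
import Mathlib

section
/- If X is a real random variable with |X| ≤ c almost surely and E[X] = 0, then for every t > 0, E[exp(tX)] ≤ exp((σ²/c²)·(e^{tc} − 1 − ct)), where σ² = Var(X). -/
open MeasureTheory ProbabilityTheory

/-! Comparing the power series of `e^u - 1 - u` term by term shows that `(e^u - 1 - u) / u²` is
nondecreasing in `|u|`, so for `|X| ≤ c` we get the quadratic majorant
`e^{tX} ≤ 1 + tX + (X/c)² (e^{tc} - 1 - tc)`. Taking expectations with `E[X] = 0` and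
`E[X²] = σ²` gives `E[e^{tX}] ≤ 1 + (σ²/c²)(e^{tc} - 1 - tc)`, and `1 + y ≤ e^y` finishes. -/

theorem Real.hasSum_exp_sub_one_sub (u : ℝ) :
    HasSum (fun n : ℕ => u ^ (n + 2) / (n + 2).factorial) (Real.exp u - 1 - u) := by
  have h := NormedSpace.expSeries_div_hasSum_exp (𝔸 := ℝ) u
  rw [← Real.exp_eq_exp_ℝ, ← hasSum_nat_add_iff' 2] at h
  simpa [Finset.sum_range_succ, sub_sub] using h

theorem Real.sq_mul_exp_sub_one_sub_le {u v : ℝ} (huv : |u| ≤ v) :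
    v ^ 2 * (Real.exp u - 1 - u) ≤ u ^ 2 * (Real.exp v - 1 - v) := by
  refine hasSum_le (fun n => ?_) ((Real.hasSum_exp_sub_one_sub u).mul_left _)
    ((Real.hasSum_exp_sub_one_sub v).mul_left _)
  rw [← mul_div_assoc, ← mul_div_assoc]
  refine div_le_div_of_nonneg_right ?_ (Nat.cast_nonneg _)
  calc v ^ 2 * u ^ (n + 2) ≤ v ^ 2 * (|u| ^ 2 * |u| ^ n) := by
        gcongr; rw [← pow_add, add_comm, ← abs_pow]; exact le_abs_self _
    _ ≤ v ^ 2 * (|u| ^ 2 * v ^ n) := by gcongr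
    _ = u ^ 2 * v ^ (n + 2) := by rw [sq_abs]; ring

theorem Real.exp_mul_le_of_abs_le {x c t : ℝ} (hc : 0 < c) (ht : 0 < t) (hx : |x| ≤ c) :
    Real.exp (t * x) ≤ 1 + t * x + x ^ 2 / c ^ 2 * (Real.exp (t * c) - 1 - c * t) := by
  have hkey := Real.sq_mul_exp_sub_one_sub_le (u := t * x) (v := t * c)
    (by rw [abs_mul, abs_of_pos ht]; gcongr)
  have : Real.exp (t * x) - 1 - t * x ≤ x ^ 2 / c ^ 2 * (Real.exp (t * c) - 1 - c * t) := by
    rw [div_mul_eq_mul_div, le_div_iff₀ (by positivity)]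
    nlinarith [pow_pos ht 2]
  linarith

theorem ProbabilityTheory.integral_exp_mul_le {Ω : Type*} {mΩ : MeasurableSpace Ω}
    {μ : Measure Ω} [IsProbabilityMeasure μ] {X : Ω → ℝ} {c t : ℝ}
    (hX : AEMeasurable X μ) (hc : 0 < c) (ht : 0 < t) (hbd : ∀ᵐ ω ∂μ, |X ω| ≤ c)
    (hmean : μ[X] = 0) :
    ∫ ω, Real.exp (t * X ω) ∂μ ≤ 1 + variance X μ / c ^ 2 * (Real.exp (t * c) - 1 - c * t) := by
  set K := Real.exp (t * c) - 1 - c * t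
  have hL2 : MemLp X 2 μ := MemLp.of_bound hX.aestronglyMeasurable c hbd
  have hint_exp : Integrable (fun ω => Real.exp (t * X ω)) μ := by
    refine Integrable.of_bound (by fun_prop) (Real.exp (t * c)) ?_
    filter_upwards [hbd] with ω h
    rw [Real.norm_eq_abs, abs_of_pos (Real.exp_pos _), Real.exp_le_exp]
    exact mul_le_mul_of_nonneg_left (abs_le.1 h).2 ht.le
  have hint_X : Integrable (fun ω => t * X ω) μ := (hL2.integrable one_le_two).const_mul t
  have hint_lin : Integrable (fun ω => 1 + t * X ω) μ := (integrable_const 1).add hint_X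
  have hint_sq : Integrable (fun ω => X ω ^ 2 / c ^ 2 * K) μ :=
    (hL2.integrable_sq.div_const _).mul_const K
  calc ∫ ω, Real.exp (t * X ω) ∂μ ≤ ∫ ω, 1 + t * X ω + X ω ^ 2 / c ^ 2 * K ∂μ :=
        integral_mono_ae hint_exp (hint_lin.add hint_sq)
          (hbd.mono fun ω h => Real.exp_mul_le_of_abs_le hc ht h)
    _ = 1 + variance X μ / c ^ 2 * K := by
        rw [integral_add hint_lin hint_sq, integral_add (integrable_const 1) hint_X,
          integral_const_mul, integral_mul_const, integral_div, hmean,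
          variance_of_integral_eq_zero hX hmean]
        simp

theorem stmt1 {Ω : Type*} [MeasureSpace Ω] [IsProbabilityMeasure (ℙ : Measure Ω)]
    (X : Ω → ℝ) (hX : Measurable X) (c : ℝ) (hc : 0 < c)
    (hbd : ∀ᵐ ω, |X ω| ≤ c)
    (hmean : ∫ ω, X ω = 0) :
    ∀ t : ℝ, 0 < t →
      ∫ ω, Real.exp (t * X ω) ≤
        Real.exp ((variance X ℙ / c ^ 2) * (Real.exp (t * c) - 1 - c * t)) := by
  intro t ht
  calc ∫ ω, Real.exp (t * X ω) ≤ 1 + variance X ℙ / c ^ 2 * (Real.exp (t * c) - 1 - c * t) :=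
        integral_exp_mul_le hX.aemeasurable hc ht hbd hmean
    _ ≤ _ := by rw [add_comm]; exact Real.add_one_le_exp _
end

section
/- Consider two linear programs over variables x ∈ ℝ^{I×J}, x ≥ 0, with constraints ∑ᵢ x_{ij} ≤ 1 for all j, and for each k: L_k ≤ ∑_{i,j} T·p_j·a_{ijk}·x_{ij} ≤ U_k (program E(0)) versus L_k + τ·T·ā_k ≤ ∑_{i,j} T·p_j·a_{ijk}·x_{ij} ≤ U_k (program E(τ)), both maximizing ∑_{i,j} T·p_j·w_{ij}·x_{ij}. Suppose there exist ξ* > τ > 0 and a point x' ≥ 0 with ∑ᵢ x'_{ij} ≤ 1 for all j satisfying L_k + ξ*·T·ā_k ≤ ∑_{i,j} T·p_j·a_{ijk}·x'_{ij} ≤ U_k for all k. Then the optimal value W_τ of E(τ) satisfies W_τ ≥ (1 − τ/ξ*)·W_E, where W_E is the optimal value of E(0). -/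
open Finset

theorem stmt6 {I J K : Type*} [Fintype I] [Fintype J] [Fintype K]
    (T : ℝ) (hT : 0 < T)
    (p : J → ℝ) (hp : ∀ j, 0 ≤ p j)
    (a : I → J → K → ℝ) (abar : K → ℝ)
    (ha : ∀ i j k, a i j k ∈ Set.Icc 0 (abar k))
    (w : I → J → ℝ) (hw : ∀ i j, 0 ≤ w i j)
    (L U : K → ℝ) (hL : ∀ k, 0 ≤ L k) (hLU : ∀ k, L k ≤ U k)
    (τ ξstar : ℝ) (hτ : 0 < τ) (hτξ : τ < ξstar)
    (x' : I → J → ℝ) (hx'0 : ∀ i j, 0 ≤ x' i j)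
    (hx'1 : ∀ j, ∑ i, x' i j ≤ 1)
    (hx'L : ∀ k, L k + ξstar * T * abar k ≤ ∑ i, ∑ j, T * p j * a i j k * x' i j)
    (hx'U : ∀ k, ∑ i, ∑ j, T * p j * a i j k * x' i j ≤ U k)
    (WE Wτ : ℝ)
    (hWE : IsGreatest {v : ℝ | ∃ x : I → J → ℝ, (∀ i j, 0 ≤ x i j) ∧
      (∀ j, ∑ i, x i j ≤ 1) ∧
      (∀ k, L k ≤ ∑ i, ∑ j, T * p j * a i j k * x i j ∧
        ∑ i, ∑ j, T * p j * a i j k * x i j ≤ U k) ∧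
      v = ∑ i, ∑ j, T * p j * w i j * x i j} WE)
    (hWτ : IsGreatest {v : ℝ | ∃ x : I → J → ℝ, (∀ i j, 0 ≤ x i j) ∧
      (∀ j, ∑ i, x i j ≤ 1) ∧
      (∀ k, L k + τ * T * abar k ≤ ∑ i, ∑ j, T * p j * a i j k * x i j ∧
        ∑ i, ∑ j, T * p j * a i j k * x i j ≤ U k) ∧
      v = ∑ i, ∑ j, T * p j * w i j * x i j} Wτ)
    (hWEpos : 0 < WE) :
    (1 - τ / ξstar) * WE ≤ Wτ := by

  obtain ⟨xs, hxs0, hxs1, hxsLU, hxsv⟩ := hWE.1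
  have hξ : 0 < ξstar := hτ.trans hτξ
  set lam : ℝ := τ / ξstar with hlam
  have hl0 : 0 < lam := div_pos hτ hξ
  have hl1 : lam < 1 := (div_lt_one hξ).2 hτξ
  set x : I → J → ℝ := fun i j => (1 - lam) * xs i j + lam * x' i j with hxdef
  have key : ∀ c : I → J → ℝ,
      ∑ i, ∑ j, c i j * x i j
        = (1 - lam) * (∑ i, ∑ j, c i j * xs i j) + lam * (∑ i, ∑ j, c i j * x' i j) := by
    intro c
    simp only [hxdef, Finset.mul_sum, ← Finset.sum_add_distrib]
    refine Finset.sum_congr rfl fun i _ => Finset.sum_congr rfl fun j _ => ?_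
    ring
  have key2 : ∀ (c : J → ℝ) (b : I → J → K → ℝ) (k : K),
      ∑ i, ∑ j, T * c j * b i j k * x i j
        = (1 - lam) * (∑ i, ∑ j, T * c j * b i j k * xs i j)
          + lam * (∑ i, ∑ j, T * c j * b i j k * x' i j) := by
    intro c b k
    exact key (fun i j => T * c j * b i j k)
  have hmem : (∑ i, ∑ j, T * p j * w i j * x i j) ∈
      {v : ℝ | ∃ x : I → J → ℝ, (∀ i j, 0 ≤ x i j) ∧
        (∀ j, ∑ i, x i j ≤ 1) ∧
        (∀ k, L k + τ * T * abar k ≤ ∑ i, ∑ j, T * p j * a i j k * x i j ∧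
          ∑ i, ∑ j, T * p j * a i j k * x i j ≤ U k) ∧
        v = ∑ i, ∑ j, T * p j * w i j * x i j} := by
    refine ⟨x, fun i j => ?_, fun j => ?_, fun k => ⟨?_, ?_⟩, rfl⟩
    · have := hxs0 i j
      have := hx'0 i j
      have h1 : 0 ≤ 1 - lam := le_of_lt (by linarith)
      simp only [hxdef]
      positivity
    · have : ∑ i, x i j = (1 - lam) * (∑ i, xs i j) + lam * (∑ i, x' i j) := by
        simp only [hxdef, Finset.mul_sum, ← Finset.sum_add_distrib]
      rw [this]
      have h1 := hxs1 j
      have h2 := hx'1 j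
      nlinarith
    · rw [key2 p a k]
      have h1 := (hxsLU k).1
      have h2 := hx'L k
      have hlm : lam * ξstar = τ := div_mul_cancel₀ τ (ne_of_gt hξ)
      have e1 := mul_le_mul_of_nonneg_left h1 (by linarith : (0:ℝ) ≤ 1 - lam)
      have e2 := mul_le_mul_of_nonneg_left h2 hl0.le
      have e3 : lam * (ξstar * T * abar k) = τ * T * abar k := by
        rw [← hlm]; ring
      nlinarith [e1, e2, e3]
    · rw [key2 p a k]
      have h1 := (hxsLU k).2
      have h2 := hx'U k
      nlinarith
  have hle := hWτ.2 hmem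
  have hobj' : 0 ≤ ∑ i, ∑ j, T * p j * w i j * x' i j := by
    refine Finset.sum_nonneg fun i _ => Finset.sum_nonneg fun j _ => ?_
    have := hp j; have := hw i j; have := hx'0 i j
    positivity
  have hval : ∑ i, ∑ j, T * p j * w i j * x i j
      = (1 - lam) * WE + lam * (∑ i, ∑ j, T * p j * w i j * x' i j) := by
    rw [key (fun i j => T * p j * w i j), ← hxsv]
  rw [hval] at hle
  nlinarith
end

section
/- Let (α, β, ρ) ≥ 0 satisfy, for all i, j: ∑_k (α_k − β_k)·T·p_j·a_{ijk} − T·p_j·w_{ij} + ρ_j ≥ 0. Suppose there exist ξ* > 0 and x' ≥ 0 with ∑ᵢ x'_{ij} ≤ 1 for all j, ∑_{i,j} T·p_j·a_{ijk}·x'_{ij} ≤ U_k, and ∑_{i,j} T·p_j·a_{ijk}·x'_{ij} ≥ L_k + ξ*·T·ā_k for all k. Then for any τ with 0 < τ ≤ ξ*, ∑_k τ·T·ā_k·β_k ≤ (τ/ξ*)·(∑_k α_k·U_k − ∑_k β_k·L_k + ∑_j ρ_j), provided the right-hand side without the τ-term is positive. -/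
open Finset

theorem stmt7 {I J K : Type*} [Fintype I] [Fintype J] [Fintype K]
    (T : ℝ) (hT : 0 < T)
    (p : J → ℝ) (hp : ∀ j, 0 ≤ p j)
    (a : I → J → K → ℝ) (abar : K → ℝ)
    (ha : ∀ i j k, a i j k ∈ Set.Icc 0 (abar k))
    (w : I → J → ℝ) (hw : ∀ i j, 0 ≤ w i j)
    (L U : K → ℝ) (hL : ∀ k, 0 ≤ L k) (hU : ∀ k, 0 ≤ U k)
    (α β : K → ℝ) (ρ : J → ℝ)
    (hα : ∀ k, 0 ≤ α k) (hβ : ∀ k, 0 ≤ β k) (hρ : ∀ j, 0 ≤ ρ j)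
    (hdual : ∀ i j, 0 ≤ (∑ k, (α k - β k) * (T * p j * a i j k)) - T * p j * w i j + ρ j)
    (ξstar : ℝ) (hξ : 0 < ξstar)
    (x' : I → J → ℝ) (hx'0 : ∀ i j, 0 ≤ x' i j) (hx'1 : ∀ j, ∑ i, x' i j ≤ 1)
    (hx'U : ∀ k, ∑ i, ∑ j, T * p j * a i j k * x' i j ≤ U k)
    (hx'L : ∀ k, L k + ξstar * T * abar k ≤ ∑ i, ∑ j, T * p j * a i j k * x' i j)
    (τ : ℝ) (hτ : 0 < τ) (hτξ : τ ≤ ξstar)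
    (hpos : 0 < (∑ k, α k * U k) - (∑ k, β k * L k) + ∑ j, ρ j) :
    ∑ k, τ * T * abar k * β k ≤
      (τ / ξstar) * ((∑ k, α k * U k) - (∑ k, β k * L k) + ∑ j, ρ j) := by
  set S : K → ℝ := fun k => ∑ i, ∑ j, T * p j * a i j k * x' i j with hS
  -- main inequality: 0 ≤ ∑ k, (α k - β k) * S k + ∑ j, (∑ i, x' i j) * ρ j
  have key : 0 ≤ ∑ k, (α k - β k) * S k + ∑ j, (∑ i, x' i j) * ρ j := by
    have h1 : ∀ i j, 0 ≤ x' i j * ((∑ k, (α k - β k) * (T * p j * a i j k)) + ρ j) := by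
      intro i j
      apply mul_nonneg (hx'0 i j)
      have := hdual i j
      have hw' : 0 ≤ T * p j * w i j :=
        mul_nonneg (mul_nonneg hT.le (hp j)) (hw i j)
      linarith
    have h2 : 0 ≤ ∑ i, ∑ j, x' i j * ((∑ k, (α k - β k) * (T * p j * a i j k)) + ρ j) :=
      Finset.sum_nonneg fun i _ => Finset.sum_nonneg fun j _ => h1 i j
    have heq : ∑ i, ∑ j, x' i j * ((∑ k, (α k - β k) * (T * p j * a i j k)) + ρ j)
        = ∑ k, (α k - β k) * S k + ∑ j, (∑ i, x' i j) * ρ j := by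
      simp only [hS, mul_add, Finset.mul_sum, Finset.sum_mul, Finset.sum_add_distrib]
      congr 1
      · calc ∑ i : I, ∑ j : J, ∑ k : K, x' i j * ((α k - β k) * (T * p j * a i j k))
            = ∑ i : I, ∑ k : K, ∑ j : J, x' i j * ((α k - β k) * (T * p j * a i j k)) :=
              Finset.sum_congr rfl fun i _ => Finset.sum_comm
          _ = ∑ k : K, ∑ i : I, ∑ j : J, x' i j * ((α k - β k) * (T * p j * a i j k)) :=
              Finset.sum_comm
          _ = ∑ k : K, ∑ i : I, ∑ j : J, (α k - β k) * (T * p j * a i j k * x' i j) :=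
              Finset.sum_congr rfl fun k _ => Finset.sum_congr rfl fun i _ =>
                Finset.sum_congr rfl fun j _ => by ring
      · exact Finset.sum_comm
    rwa [heq] at h2
  have hSα : ∑ k, α k * S k ≤ ∑ k, α k * U k :=
    Finset.sum_le_sum fun k _ => mul_le_mul_of_nonneg_left (hx'U k) (hα k)
  have hSβ : ∑ k, β k * (L k + ξstar * T * abar k) ≤ ∑ k, β k * S k :=
    Finset.sum_le_sum fun k _ => mul_le_mul_of_nonneg_left (hx'L k) (hβ k)
  have hρ' : ∑ j, (∑ i, x' i j) * ρ j ≤ ∑ j, ρ j := by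
    refine Finset.sum_le_sum fun j _ => ?_
    nth_rewrite 2 [← one_mul (ρ j)]
    exact mul_le_mul_of_nonneg_right (hx'1 j) (hρ j)
  have hsplit : ∑ k, (α k - β k) * S k = ∑ k, α k * S k - ∑ k, β k * S k := by
    rw [← Finset.sum_sub_distrib]
    exact Finset.sum_congr rfl fun k _ => by ring
  have hexp : ∑ k, β k * (L k + ξstar * T * abar k)
      = ∑ k, β k * L k + ξstar * ∑ k, T * abar k * β k := by
    rw [Finset.mul_sum, ← Finset.sum_add_distrib]
    exact Finset.sum_congr rfl fun k _ => by ring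
  -- so ξ* * ∑ T abar β ≤ RHS0
  have hmain : ξstar * ∑ k, T * abar k * β k
      ≤ (∑ k, α k * U k) - (∑ k, β k * L k) + ∑ j, ρ j := by
    rw [hsplit] at key
    rw [hexp] at hSβ
    linarith
  have hτξ' : τ / ξstar ≤ 1 := by
    rw [div_le_one hξ]; exact hτξ
  have hlhs : ∑ k, τ * T * abar k * β k = (τ / ξstar) * (ξstar * ∑ k, T * abar k * β k) := by
    rw [Finset.mul_sum, Finset.mul_sum]
    refine Finset.sum_congr rfl fun k _ => ?_
    field_simp
  rw [hlhs]
  exact mul_le_mul_of_nonneg_left hmain (div_nonneg hτ.le hξ.le)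
end
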